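/- Let I ⊆ k[x_1,…,x_n] be an ideal and let ℚ^r carry the lexicographic order. (1) If M ∈ ℚ^{r×n} has all entries ≤ 0, then there exists a monomial order > on k[x_1,…,x_n] with in_>(in_M(I)) = in_>(I); in other words, the set of matrices with all columns in ℚ_{≤0}^r is contained in the rank-r Gröbner region GR^r(I). (2) If I is homogeneous with respect to a grading assigning each x_i a positive integer degree d_i, then for every M ∈ ℚ^{r×n} there exists a monomial order > with in_>(in_M(I)) = in_>(I), i.e. GR^r(I) = ℚ^{r×n}. -/

import Mathlib

open MvPolynomial

instance finWellFoundedLT {r : ℕ} : WellFoundedLT (Fin r) := Finite.to_wellFoundedLT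

/-- The initial form of a polynomial with respect to a comparison `le` on exponent vectors:
the sum of the terms of `f` whose exponent is `le`-minimal in the support of `f`.
For a total order this is the single `le`-smallest term of `f`. -/
noncomputable def initialForm {k : Type} [Field k] {n : ℕ}
    (le : (Fin n →₀ ℕ) → (Fin n →₀ ℕ) → Prop)
    (f : MvPolynomial (Fin n) k) : MvPolynomial (Fin n) k :=
  letI := Classical.decPred fun α : Fin n →₀ ℕ => ∀ β ∈ f.support, le α β
  ∑ α ∈ f.support.filter (fun α => ∀ β ∈ f.support, le α β),
    monomial α (MvPolynomial.coeff α f)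

/-- The initial ideal of `I`: the ideal generated by initial forms of nonzero elements of `I`. -/
noncomputable def initialIdeal {k : Type} [Field k] {n : ℕ}
    (le : (Fin n →₀ ℕ) → (Fin n →₀ ℕ) → Prop)
    (I : Ideal (MvPolynomial (Fin n) k)) : Ideal (MvPolynomial (Fin n) k) :=
  Ideal.span {g | ∃ f ∈ I, f ≠ 0 ∧ g = initialForm le f}

/-- The weight `Mα ∈ ℚ^r` of an exponent vector `α` under the weighting matrix `M`. -/
def mwt {n r : ℕ} (M : Matrix (Fin r) (Fin n) ℚ) (α : Fin n →₀ ℕ) : Fin r → ℚ :=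
  fun i => ∑ j, M i j * (α j : ℚ)

/-- Comparison of exponents by `M`-weight, in the lexicographic order on `ℚ^r`. -/
def mLe {n r : ℕ} (M : Matrix (Fin r) (Fin n) ℚ) : (Fin n →₀ ℕ) → (Fin n →₀ ℕ) → Prop :=
  fun α β => toLex (mwt M α) ≤ toLex (mwt M β)

/-- A monomial order on `k[x₁,…,xₙ]` in the MIN convention: a total order on exponent
vectors compatible with addition in which `0` (the monomial `1`) is the greatest element. -/
structure MinMonomialOrder (n : ℕ) where
  le : (Fin n →₀ ℕ) → (Fin n →₀ ℕ) → Prop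
  total : ∀ a b, le a b ∨ le b a
  antisymm : ∀ a b, le a b → le b a → a = b
  trans : ∀ a b c, le a b → le b c → le a c
  add_le_add : ∀ a b c, le a b → le (a + c) (b + c)
  le_zero : ∀ a, le a 0

/-- `α` is the exponent of the initial (i.e. `le`-smallest) term of `f`. -/
def IsLeadExp {k : Type} [Field k] {n : ℕ} (mo : MinMonomialOrder n)
    (f : MvPolynomial (Fin n) k) (α : Fin n →₀ ℕ) : Prop :=
  α ∈ f.support ∧ ∀ β ∈ f.support, mo.le α β

/-- `G` is the reduced Gröbner basis of `I` with respect to the monomial order `mo`: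
`G ⊆ I`, the initial terms of `G` generate the initial ideal of `I`, every `g ∈ G` is monic,
no initial term of one element divides the initial term of another, and no non-initial term
of any `g ∈ G` is divisible by the initial term of any `g' ∈ G`.  (Divisibility of monomials
is the componentwise order `≤` on exponents.) -/
def IsReducedGB {k : Type} [Field k] {n : ℕ} (mo : MinMonomialOrder n)
    (I : Ideal (MvPolynomial (Fin n) k)) (G : Finset (MvPolynomial (Fin n) k)) : Prop :=
  (↑G : Set (MvPolynomial (Fin n) k)) ⊆ ↑I ∧ (0 : MvPolynomial (Fin n) k) ∉ G ∧
  initialIdeal mo.le I = Ideal.span ((fun g => initialForm mo.le g) '' ↑G) ∧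
  (∀ g ∈ G, ∀ α, IsLeadExp mo g α → MvPolynomial.coeff α g = 1) ∧
  (∀ g ∈ G, ∀ g' ∈ G, g ≠ g' → ∀ α α', IsLeadExp mo g α → IsLeadExp mo g' α' → ¬ α' ≤ α) ∧
  (∀ g ∈ G, ∀ g' ∈ G, ∀ β ∈ g.support, ¬ IsLeadExp mo g β →
    ∀ α', IsLeadExp mo g' α' → ¬ α' ≤ β)

/-- The `d`-weighted homogeneous component of degree `m` of a polynomial. -/
noncomputable def homComponent {k : Type} [Field k] {n : ℕ} (d : Fin n → ℕ) (m : ℕ)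
    (f : MvPolynomial (Fin n) k) : MvPolynomial (Fin n) k :=
  ∑ α ∈ f.support.filter (fun α => (∑ j, d j * α j) = m),
    monomial α (MvPolynomial.coeff α f)

/-! For a weight vector `ω` with values in an ordered abelian group and a monomial order `>`
refining the `ω`-weight, `in_>(in_ω f) = in_> f`. Moreover every nonzero `g ∈ in_ω(I)` has the same
`ω`-initial form as some `h ∈ I`: by span induction, every weight component of an element of
`in_ω(I)` is the lowest component of an element of `I`. Together these give
`in_>(in_ω(I)) = in_>(I)` for every monomial order refining `ω`.

If `ω ≤ 0`, breaking ties of the `ω`-weight by a reversed lexicographic order gives such a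
monomial order in which `1` is the largest monomial. If `I` is homogeneous for a positive grading
`d`, replacing `ω` by `ω - c d` does not change `in_ω(I)`, and for `c` large it makes `ω ≤ 0`. -/

open Finsupp (weight)

section WeightInitialForm

variable {k : Type} [Field k] {n : ℕ}

open Classical in
theorem coeff_initialForm (le : (Fin n →₀ ℕ) → (Fin n →₀ ℕ) → Prop)
    (f : MvPolynomial (Fin n) k) (β : Fin n →₀ ℕ) :
    coeff β (initialForm le f) =
      if β ∈ f.support ∧ ∀ γ ∈ f.support, le β γ then coeff β f else 0 := by
  rw [initialForm, coeff_sum]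
  simp only [coeff_monomial]
  rw [Finset.sum_ite_eq' _ β (fun α => coeff α f)]
  simp only [Finset.mem_filter]

variable {Γ : Type*} [AddCommGroup Γ] {ω : Fin n → Γ}

theorem weightedHomogeneousComponent_monomial_mul (γ : Fin n →₀ ℕ) (c : k)
    (f : MvPolynomial (Fin n) k) (v : Γ) :
    weightedHomogeneousComponent ω v (monomial γ c * f) =
      monomial γ c * weightedHomogeneousComponent ω (v - weight ω γ) f := by
  classical
  ext β
  rw [coeff_weightedHomogeneousComponent, coeff_monomial_mul', coeff_monomial_mul',
    coeff_weightedHomogeneousComponent]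
  by_cases hγβ : γ ≤ β
  · have : weight ω (β - γ) = v - weight ω γ ↔ weight ω β = v := by
      rw [eq_sub_iff_add_eq', ← map_add, add_tsub_cancel_of_le hγβ]
    simp only [hγβ, this]
    split_ifs <;> simp
  · simp [hγβ]

variable [LinearOrder Γ]

variable (ω) in
def weightLe : (Fin n →₀ ℕ) → (Fin n →₀ ℕ) → Prop := fun α β => weight ω α ≤ weight ω β

theorem initialForm_weightLe_of_le {f : MvPolynomial (Fin n) k} {v : Γ}
    (hv : ∀ β ∈ f.support, v ≤ weight ω β) (hne : weightedHomogeneousComponent ω v f ≠ 0) :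
    initialForm (weightLe ω) f = weightedHomogeneousComponent ω v f := by
  classical
  obtain ⟨α, hα⟩ := MvPolynomial.ne_zero_iff.1 hne
  rw [coeff_weightedHomogeneousComponent, ite_ne_right_iff] at hα
  have hαf : α ∈ f.support := MvPolynomial.mem_support_iff.2 hα.2
  ext β
  rw [coeff_initialForm, coeff_weightedHomogeneousComponent]
  by_cases hβ : β ∈ f.support
  · have : (∀ γ ∈ f.support, weightLe ω β γ) ↔ weight ω β = v :=
      ⟨fun h => le_antisymm (hα.1 ▸ h α hαf) (hv β hβ),
        fun h γ hγ => (h ▸ hv γ hγ : weight ω β ≤ weight ω γ)⟩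
    simp only [hβ, true_and, this]
  · simp [MvPolynomial.notMem_support_iff.1 hβ]

theorem exists_lowest_weight {f : MvPolynomial (Fin n) k} (hf : f ≠ 0) :
    ∃ v, (∀ β ∈ f.support, v ≤ weight ω β) ∧ weightedHomogeneousComponent ω v f ≠ 0 := by
  classical
  obtain ⟨α, hα, hmin⟩ := f.support.exists_min_image (weight ω) (support_nonempty.2 hf)
  refine ⟨weight ω α, hmin, fun h0 => ?_⟩
  have := congrArg (coeff α) h0
  rw [coeff_weightedHomogeneousComponent, if_pos rfl, coeff_zero] at this
  exact MvPolynomial.mem_support_iff.1 hα this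

theorem initialForm_weightLe_ne_zero {f : MvPolynomial (Fin n) k} (hf : f ≠ 0) :
    initialForm (weightLe ω) f ≠ 0 := by
  obtain ⟨v, hv, hne⟩ := exists_lowest_weight (ω := ω) hf
  rwa [initialForm_weightLe_of_le hv hne]

theorem weightedHomogeneousComponent_mem_initialIdeal {I : Ideal (MvPolynomial (Fin n) k)}
    {f : MvPolynomial (Fin n) k} (hf : f ∈ I) {v : Γ} (hv : ∀ β ∈ f.support, v ≤ weight ω β) :
    weightedHomogeneousComponent ω v f ∈ initialIdeal (weightLe ω) I := by
  by_cases hne : weightedHomogeneousComponent ω v f = 0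
  · rw [hne]; exact zero_mem _
  refine Ideal.subset_span ⟨f, hf, fun h0 => hne ?_, (initialForm_weightLe_of_le hv hne).symm⟩
  rw [h0, map_zero]

variable [IsOrderedAddMonoid Γ]

theorem le_weight_of_mem_support_monomial_mul {γ : Fin n →₀ ℕ} {c : k}
    {f : MvPolynomial (Fin n) k} {v : Γ} (hv : ∀ β ∈ f.support, v ≤ weight ω β) :
    ∀ β ∈ (monomial γ c * f).support, weight ω γ + v ≤ weight ω β := by
  intro β hβ
  rw [MvPolynomial.mem_support_iff, coeff_monomial_mul'] at hβ
  split_ifs at hβ with hγβ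
  · rw [← add_tsub_cancel_of_le hγβ, map_add]
    exact add_le_add le_rfl (hv _ (MvPolynomial.mem_support_iff.2 (right_ne_zero_of_mul hβ)))
  · exact absurd rfl hβ

theorem weight_nonpos_of_nonpos (hω : ∀ j, ω j ≤ 0) (a : Fin n →₀ ℕ) : weight ω a ≤ 0 := by
  rw [Finsupp.weight_eq_sum]
  exact Finset.sum_nonpos fun j _ => nsmul_nonpos (hω j) _

end WeightInitialForm

section LowestWeightLift

variable {k : Type} [Field k] {n : ℕ}
variable {Γ : Type*} [AddCommGroup Γ] [LinearOrder Γ] [IsOrderedAddMonoid Γ] {ω : Fin n → Γ}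

theorem exists_mem_weightedHomogeneousComponent_eq {I : Ideal (MvPolynomial (Fin n) k)}
    {g : MvPolynomial (Fin n) k} (hg : g ∈ initialIdeal (weightLe ω) I) (v : Γ) :
    ∃ h ∈ I, (∀ β ∈ h.support, v ≤ weight ω β) ∧
      weightedHomogeneousComponent ω v h = weightedHomogeneousComponent ω v g := by
  have hadd : ∀ x y : MvPolynomial (Fin n) k,
      (∀ v, ∃ h ∈ I, (∀ β ∈ h.support, v ≤ weight ω β) ∧
        weightedHomogeneousComponent ω v h = weightedHomogeneousComponent ω v x) →
      (∀ v, ∃ h ∈ I, (∀ β ∈ h.support, v ≤ weight ω β) ∧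
        weightedHomogeneousComponent ω v h = weightedHomogeneousComponent ω v y) →
      ∀ v, ∃ h ∈ I, (∀ β ∈ h.support, v ≤ weight ω β) ∧
        weightedHomogeneousComponent ω v h = weightedHomogeneousComponent ω v (x + y) := by
    intro x y hx hy v
    classical
    obtain ⟨h₁, h₁I, h₁v, h₁x⟩ := hx v
    obtain ⟨h₂, h₂I, h₂v, h₂y⟩ := hy v
    refine ⟨h₁ + h₂, add_mem h₁I h₂I, fun β hβ => ?_, by rw [map_add, map_add, h₁x, h₂y]⟩
    exact (Finset.mem_union.1 (support_add hβ)).elim (h₁v β) (h₂v β)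
  induction hg using Submodule.span_induction generalizing v with
  | mem x hx =>
    obtain ⟨f, hfI, hf0, rfl⟩ := hx
    obtain ⟨u, hu, hne⟩ := exists_lowest_weight (ω := ω) hf0
    have hhom := weightedHomogeneousComponent_isWeightedHomogeneous (w := ω) u f
    rw [initialForm_weightLe_of_le hu hne]
    by_cases hvu : v = u
    · subst hvu
      exact ⟨f, hfI, hu, hhom.weightedHomogeneousComponent_same.symm⟩
    · exact ⟨0, zero_mem _, by simp, by rw [map_zero, hhom.weightedHomogeneousComponent_ne v hvu]⟩
  | zero => exact ⟨0, zero_mem _, by simp, rfl⟩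
  | add x y _ _ hx hy => exact hadd x y hx hy v
  | smul a x _ hx =>
    rw [smul_eq_mul]
    induction a using MvPolynomial.induction_on' generalizing v with
    | monomial γ c =>
      obtain ⟨h, hI, hv, hx⟩ := hx (v - weight ω γ)
      refine ⟨monomial γ c * h, I.mul_mem_left _ hI, fun β hβ => ?_, ?_⟩
      · simpa using le_weight_of_mem_support_monomial_mul hv β hβ
      · rw [weightedHomogeneousComponent_monomial_mul, weightedHomogeneousComponent_monomial_mul,
          hx]
    | add p q hp hq => rw [add_mul]; exact hadd _ _ hp hq v

theorem exists_mem_initialForm_eq {I : Ideal (MvPolynomial (Fin n) k)}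
    {g : MvPolynomial (Fin n) k} (hg : g ∈ initialIdeal (weightLe ω) I) (hg0 : g ≠ 0) :
    ∃ h ∈ I, h ≠ 0 ∧ initialForm (weightLe ω) h = initialForm (weightLe ω) g := by
  obtain ⟨v, hgv, hne⟩ := exists_lowest_weight (ω := ω) hg0
  obtain ⟨h, hI, hhv, hhg⟩ := exists_mem_weightedHomogeneousComponent_eq hg v
  refine ⟨h, hI, fun h0 => hne ?_, ?_⟩
  · rw [← hhg, h0, map_zero]
  · rw [initialForm_weightLe_of_le hgv hne, initialForm_weightLe_of_le hhv (hhg ▸ hne), hhg]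

end LowestWeightLift

namespace MinMonomialOrder

variable {n : ℕ}

def ofInjective {Λ : Type*} [AddCommMonoid Λ] [LinearOrder Λ] [IsOrderedAddMonoid Λ]
    (φ : (Fin n →₀ ℕ) → Λ) (hinj : Function.Injective φ)
    (hadd : ∀ a b, φ (a + b) = φ a + φ b) (hle : ∀ a, φ a ≤ φ 0) : MinMonomialOrder n where
  le a b := φ a ≤ φ b
  total _ _ := le_total _ _
  antisymm _ _ hab hba := hinj (le_antisymm hab hba)
  trans _ _ _ := le_trans
  add_le_add a b c h := by rw [hadd, hadd]; exact _root_.add_le_add h le_rfl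
  le_zero := hle

section ofWeight

variable {Γ : Type*} [AddCommGroup Γ] [LinearOrder Γ] [IsOrderedAddMonoid Γ] {ω : Fin n → Γ}

noncomputable def ofWeight (ω : Fin n → Γ) (hω : ∀ j, ω j ≤ 0) : MinMonomialOrder n :=
  -- `toDual` makes `0` the largest exponent among those of weight `0`
  ofInjective (fun a => toLex (weight ω a, OrderDual.toDual (toLex a)))
    (fun a b h => by simpa using congrArg (fun x => (ofLex x).2) h)
    (fun a b => by simp only [map_add]; rfl)
    (fun a => by
      refine (Prod.Lex.le_iff).2 ((weight_nonpos_of_nonpos hω a).lt_or_eq.imp (by simpa using ·) ?_)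
      intro h
      exact ⟨by simpa using h,
        OrderDual.toDual_le_toDual.2 (Finsupp.toLex_monotone (zero_le : 0 ≤ a))⟩)

theorem weight_le_weight_of_ofWeight_le (hω : ∀ j, ω j ≤ 0) {a b : Fin n →₀ ℕ}
    (h : (ofWeight ω hω).le a b) : weight ω a ≤ weight ω b :=
  Prod.Lex.monotone_fst _ _ h

end ofWeight

variable {k : Type} [Field k] (mo : MinMonomialOrder n)

theorem exists_mem_forall_le {s : Finset (Fin n →₀ ℕ)} (hs : s.Nonempty) :
    ∃ α ∈ s, ∀ β ∈ s, mo.le α β := by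
  induction hs using Finset.Nonempty.cons_induction with
  | singleton a => exact ⟨a, by simp, by simpa using (mo.total a a).elim id id⟩
  | cons a s ha _ ih =>
    obtain ⟨α, hα, hmin⟩ := ih
    rcases mo.total a α with h | h
    · refine ⟨a, Finset.mem_cons_self _ _, ?_⟩
      simpa [(mo.total a a).elim id id] using fun β hβ => mo.trans _ _ _ h (hmin β hβ)
    · exact ⟨α, Finset.mem_cons_of_mem hα, by simpa [h] using hmin⟩

theorem initialForm_eq_monomial {f : MvPolynomial (Fin n) k} {α : Fin n →₀ ℕ}
    (hα : α ∈ f.support) (hmin : ∀ β ∈ f.support, mo.le α β) :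
    initialForm mo.le f = monomial α (coeff α f) := by
  classical
  ext β
  rw [coeff_initialForm, coeff_monomial]
  by_cases hαβ : α = β
  · subst hαβ
    rw [if_pos ⟨hα, hmin⟩, if_pos rfl]
  · rw [if_neg hαβ, if_neg]
    rintro ⟨hβ, hβmin⟩
    exact hαβ (mo.antisymm α β (hmin β hβ) (hβmin α hα))

variable {Γ : Type*} [AddCommGroup Γ] [LinearOrder Γ] {ω : Fin n → Γ}

theorem initialForm_initialForm_weightLe
    (href : ∀ a b, mo.le a b → weight ω a ≤ weight ω b) {f : MvPolynomial (Fin n) k}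
    (hf : f ≠ 0) : initialForm mo.le (initialForm (weightLe ω) f) = initialForm mo.le f := by
  classical
  obtain ⟨α, hα, hmin⟩ := mo.exists_mem_forall_le (support_nonempty.2 hf)
  have hv : ∀ β ∈ f.support, weight ω α ≤ weight ω β := fun β hβ => href _ _ (hmin β hβ)
  have hcoeff : coeff α (weightedHomogeneousComponent ω (weight ω α) f) = coeff α f := by
    rw [coeff_weightedHomogeneousComponent, if_pos rfl]
  have hα' : α ∈ (weightedHomogeneousComponent ω (weight ω α) f).support := by
    rw [MvPolynomial.mem_support_iff, hcoeff]
    exact MvPolynomial.mem_support_iff.1 hα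
  have hne : weightedHomogeneousComponent ω (weight ω α) f ≠ 0 := fun h0 => by simp [h0] at hα'
  have hmin' : ∀ β ∈ (weightedHomogeneousComponent ω (weight ω α) f).support, mo.le α β := by
    intro β hβ
    rw [support_weightedHomogeneousComponent] at hβ
    exact hmin β (Finset.mem_filter.1 hβ).1
  rw [initialForm_weightLe_of_le hv hne, mo.initialForm_eq_monomial hα hmin,
    mo.initialForm_eq_monomial hα' hmin', hcoeff]

variable [IsOrderedAddMonoid Γ]

theorem initialIdeal_initialIdeal_weightLe
    (href : ∀ a b, mo.le a b → weight ω a ≤ weight ω b) (I : Ideal (MvPolynomial (Fin n) k)) :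
    initialIdeal mo.le (initialIdeal (weightLe ω) I) = initialIdeal mo.le I := by
  apply le_antisymm <;> refine Ideal.span_le.2 ?_ <;> rintro _ ⟨g, hg, hg0, rfl⟩
  · obtain ⟨h, hI, h0, hhg⟩ := exists_mem_initialForm_eq hg hg0
    rw [← mo.initialForm_initialForm_weightLe href hg0, ← hhg,
      mo.initialForm_initialForm_weightLe href h0]
    exact Ideal.subset_span ⟨h, hI, h0, rfl⟩
  · rw [← mo.initialForm_initialForm_weightLe href hg0]
    exact Ideal.subset_span
      ⟨_, Ideal.subset_span ⟨g, hg, hg0, rfl⟩, initialForm_weightLe_ne_zero hg0, rfl⟩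

end MinMonomialOrder

section Homogeneous

variable {k : Type} [Field k] {n : ℕ}
variable {Γ : Type*} [AddCommGroup Γ]

theorem weight_eq_add_weight_smul {ω ω' : Fin n → Γ} {d : Fin n → ℕ} {c : Γ}
    (h : ∀ j, ω' j = ω j + d j • c) (β : Fin n →₀ ℕ) :
    weight ω' β = weight ω β + weight d β • c := by
  simp only [Finsupp.weight_eq_sum, h, smul_add, Finset.sum_add_distrib, Finset.sum_smul,
    smul_smul, smul_eq_mul]

variable [LinearOrder Γ] [IsOrderedAddMonoid Γ]

theorem initialIdeal_weightLe_le_of_homogeneous {I : Ideal (MvPolynomial (Fin n) k)}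
    {d : Fin n → ℕ} (hI : ∀ f ∈ I, ∀ m : ℕ, weightedHomogeneousComponent d m f ∈ I)
    {ω ω' : Fin n → Γ} {c : Γ} (h : ∀ j, ω' j = ω j + d j • c) :
    initialIdeal (weightLe ω) I ≤ initialIdeal (weightLe ω') I := by
  classical
  refine Ideal.span_le.2 ?_
  rintro _ ⟨f, hf, hf0, rfl⟩
  obtain ⟨v, hv, hne⟩ := exists_lowest_weight (ω := ω) hf0
  rw [initialForm_weightLe_of_le hv hne, ← sum_weightedHomogeneousComponent d f,
    finsum_eq_sum _ (weightedHomogeneousComponent_finsupp f), map_sum]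
  refine Ideal.sum_mem _ fun m _ => ?_
  set g := weightedHomogeneousComponent d m f
  have hgd : ∀ β ∈ g.support, weight d β = m := fun β hβ =>
    weightedHomogeneousComponent_isWeightedHomogeneous m f (MvPolynomial.mem_support_iff.1 hβ)
  have hgv : ∀ β ∈ g.support, v ≤ weight ω β := fun β hβ => by
    rw [support_weightedHomogeneousComponent] at hβ
    exact hv β (Finset.mem_filter.1 hβ).1
  have hshift : weightedHomogeneousComponent ω v g =
      weightedHomogeneousComponent ω' (v + m • c) g := by
    ext β
    rw [coeff_weightedHomogeneousComponent (w := ω), coeff_weightedHomogeneousComponent (w := ω')]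
    by_cases hβ : β ∈ g.support
    · simp only [weight_eq_add_weight_smul h, hgd β hβ, add_left_inj]
    · simp [MvPolynomial.notMem_support_iff.1 hβ]
  rw [hshift]
  refine weightedHomogeneousComponent_mem_initialIdeal (hI f hf m) fun β hβ => ?_
  rw [weight_eq_add_weight_smul h, hgd β hβ]
  exact add_le_add (hgv β hβ) le_rfl

theorem initialIdeal_weightLe_eq_of_homogeneous {I : Ideal (MvPolynomial (Fin n) k)}
    {d : Fin n → ℕ} (hI : ∀ f ∈ I, ∀ m : ℕ, weightedHomogeneousComponent d m f ∈ I)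
    {ω ω' : Fin n → Γ} {c : Γ} (h : ∀ j, ω' j = ω j + d j • c) :
    initialIdeal (weightLe ω) I = initialIdeal (weightLe ω') I :=
  le_antisymm (initialIdeal_weightLe_le_of_homogeneous hI h)
    (initialIdeal_weightLe_le_of_homogeneous hI (c := -c) fun j => by
      rw [h, smul_neg, add_neg_cancel_right])

theorem exists_le_nsmul {ι : Type*} [Fintype ι] (ω : ι → Γ) {d : ι → ℕ} (hd : ∀ j, 0 < d j) :
    ∃ c : Γ, ∀ j, ω j ≤ d j • c := by
  refine ⟨∑ i, |ω i|, fun j => ?_⟩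
  calc ω j ≤ |ω j| := le_abs_self _
    _ ≤ ∑ i, |ω i| := Finset.single_le_sum (fun i _ => abs_nonneg (ω i)) (Finset.mem_univ j)
    _ = 1 • ∑ i, |ω i| := (one_nsmul _).symm
    _ ≤ d j • ∑ i, |ω i| := nsmul_le_nsmul_left (Finset.sum_nonneg fun i _ => abs_nonneg _) (hd j)

end Homogeneous

section GroebnerRegion

variable {k : Type} [Field k] {n : ℕ}
variable {Γ : Type*} [AddCommGroup Γ] [LinearOrder Γ] [IsOrderedAddMonoid Γ]

theorem exists_minMonomialOrder_of_nonpos {ω : Fin n → Γ} (hω : ∀ j, ω j ≤ 0)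
    (I : Ideal (MvPolynomial (Fin n) k)) :
    ∃ mo : MinMonomialOrder n,
      initialIdeal mo.le (initialIdeal (weightLe ω) I) = initialIdeal mo.le I :=
  ⟨.ofWeight ω hω, MinMonomialOrder.initialIdeal_initialIdeal_weightLe _
    (fun _ _ => MinMonomialOrder.weight_le_weight_of_ofWeight_le hω) I⟩

theorem exists_minMonomialOrder_of_homogeneous {I : Ideal (MvPolynomial (Fin n) k)}
    {d : Fin n → ℕ} (hd : ∀ j, 0 < d j)
    (hI : ∀ f ∈ I, ∀ m : ℕ, weightedHomogeneousComponent d m f ∈ I) (ω : Fin n → Γ) :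
    ∃ mo : MinMonomialOrder n,
      initialIdeal mo.le (initialIdeal (weightLe ω) I) = initialIdeal mo.le I := by
  obtain ⟨c, hc⟩ := exists_le_nsmul ω hd
  rw [initialIdeal_weightLe_eq_of_homogeneous hI (ω' := fun j => ω j - d j • c) (c := -c)
    fun j => by rw [smul_neg, sub_eq_add_neg]]
  exact exists_minMonomialOrder_of_nonpos (fun j => sub_nonpos.2 (hc j)) I

end GroebnerRegion

theorem toLex_mwt {n r : ℕ} (M : Matrix (Fin r) (Fin n) ℚ) (α : Fin n →₀ ℕ) :
    toLex (mwt M α) = weight (fun j => toLex fun i => M i j) α := by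
  rw [Finsupp.weight_eq_sum]
  change mwt M α = ∑ j, α j • fun i => M i j
  funext i
  simp [mwt, Finset.sum_apply, mul_comm]

theorem mLe_eq_weightLe {n r : ℕ} (M : Matrix (Fin r) (Fin n) ℚ) :
    mLe M = weightLe fun j => toLex fun i => M i j := by
  funext α β
  simp only [mLe, weightLe, toLex_mwt]

theorem homComponent_eq_weightedHomogeneousComponent {k : Type} [Field k] {n : ℕ}
    (d : Fin n → ℕ) (m : ℕ) (f : MvPolynomial (Fin n) k) :
    homComponent d m f = weightedHomogeneousComponent d m f := by
  rw [homComponent, weightedHomogeneousComponent_apply]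
  simp only [Finsupp.weight_eq_sum, smul_eq_mul, mul_comm]

/-- **The Gröbner region contains the negative orthant** (Lemma `lem-negativeGregion`).
(1) If all entries of `M` are `≤ 0` then `M` lies in the rank-`r` Gröbner region of `I`,
i.e. there is a monomial order `>` with `in_>(in_M(I)) = in_>(I)`.
(2) If `I` is homogeneous with respect to a positive grading then `GR^r(I) = ℚ^{r×n}`. -/
theorem stmt_7 {k : Type} [Field k] {n r : ℕ} (I : Ideal (MvPolynomial (Fin n) k)) :
    (∀ M : Matrix (Fin r) (Fin n) ℚ, (∀ i j, M i j ≤ 0) →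
      ∃ mo : MinMonomialOrder n,
        initialIdeal mo.le (initialIdeal (mLe M) I) = initialIdeal mo.le I) ∧
    (∀ d : Fin n → ℕ, (∀ j, 0 < d j) →
      (∀ f ∈ I, ∀ m : ℕ, homComponent d m f ∈ I) →
      ∀ M : Matrix (Fin r) (Fin n) ℚ,
        ∃ mo : MinMonomialOrder n,
          initialIdeal mo.le (initialIdeal (mLe M) I) = initialIdeal mo.le I) := by
  refine ⟨fun M hM => ?_, fun d hd hI M => ?_⟩ <;> rw [mLe_eq_weightLe]
  · exact exists_minMonomialOrder_of_nonpos (fun j => Pi.toLex_monotone fun i => hM i j) I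
  · simp only [homComponent_eq_weightedHomogeneousComponent] at hI
    exact exists_minMonomialOrder_of_homogeneous hd hI _
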